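/- Let u : ℝ² → ℝ be a C³ solution of u_yy = (u_y + 2x)·u_xx + (y − u_x)·u_xy − u_x. Then the function v(x,y) := −y − (1/2)·u_x(x,y) satisfies the linearized equation v_yy = (u_y + 2x)·v_xx + u_xx·v_y + (y − u_x)·v_xy − (u_xy + 1)·v_x at every point of ℝ². -/

import Mathlib

/-- Partial derivative of `f : ℝ² → ℝ` in the direction `v`. -/
noncomputable def pd2 (v : ℝ × ℝ) (f : ℝ × ℝ → ℝ) : ℝ × ℝ → ℝ :=
  fun p => fderiv ℝ f p v

noncomputable def dx : (ℝ × ℝ → ℝ) → ℝ × ℝ → ℝ := pd2 (1, 0)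
noncomputable def dy : (ℝ × ℝ → ℝ) → ℝ × ℝ → ℝ := pd2 (0, 1)

/-!
Let `L v` be the left side minus the right side of the linearized equation; `L` is linear on
`C²` functions. Differentiating equation (3) in `x` and commuting mixed partials gives
`L (u_x) = 2 u_xx`, while `L (y) = -u_xx` directly, so `L (-y - u_x / 2) = 0`.
-/

section Pd2

variable {f g : ℝ × ℝ → ℝ}

lemma contDiff_pd2 {n m : WithTop ℕ∞} (hf : ContDiff ℝ n f) (h : m + 1 ≤ n) (w : ℝ × ℝ) :
    ContDiff ℝ m (pd2 w f) :=
  (hf.fderiv_right h).clm_apply contDiff_const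

lemma differentiable_pd2 (hf : ContDiff ℝ 2 f) (w : ℝ × ℝ) : Differentiable ℝ (pd2 w f) :=
  (contDiff_pd2 (m := 1) hf (by norm_num) w).differentiable one_ne_zero

lemma pd2_const (w : ℝ × ℝ) (c : ℝ) : pd2 w (fun _ => c) = 0 := by
  ext; simp [pd2]

lemma pd2_fst (w : ℝ × ℝ) : pd2 w Prod.fst = fun _ => w.1 := by
  ext; simp [pd2, fderiv_fst]

lemma pd2_snd (w : ℝ × ℝ) : pd2 w Prod.snd = fun _ => w.2 := by
  ext; simp [pd2, fderiv_snd]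

lemma pd2_add {p : ℝ × ℝ} (w : ℝ × ℝ) (hf : DifferentiableAt ℝ f p) (hg : DifferentiableAt ℝ g p) :
    pd2 w (fun q => f q + g q) p = pd2 w f p + pd2 w g p := by
  simp [pd2, fderiv_fun_add hf hg]

lemma pd2_sub {p : ℝ × ℝ} (w : ℝ × ℝ) (hf : DifferentiableAt ℝ f p) (hg : DifferentiableAt ℝ g p) :
    pd2 w (fun q => f q - g q) p = pd2 w f p - pd2 w g p := by
  simp [pd2, fderiv_fun_sub hf hg]

lemma pd2_mul {p : ℝ × ℝ} (w : ℝ × ℝ) (hf : DifferentiableAt ℝ f p) (hg : DifferentiableAt ℝ g p) :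
    pd2 w (fun q => f q * g q) p = pd2 w f p * g p + f p * pd2 w g p := by
  simp [pd2, fderiv_fun_mul hf hg, add_comm, mul_comm]

lemma pd2_linear_comb (w : ℝ × ℝ) (a b : ℝ) (hf : Differentiable ℝ f) (hg : Differentiable ℝ g) :
    pd2 w (fun q => a * f q + b * g q) = fun q => a * pd2 w f q + b * pd2 w g q := by
  ext q
  simp [pd2, fderiv_fun_add ((hf q).const_mul a) ((hg q).const_mul b), fderiv_const_mul (hf q),
    fderiv_const_mul (hg q)]

lemma pd2_pd2 (hf : ContDiff ℝ 2 f) (w w' p : ℝ × ℝ) :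
    pd2 w (pd2 w' f) p = fderiv ℝ (fderiv ℝ f) p w w' := by
  have hdf : Differentiable ℝ (fderiv ℝ f) :=
    (hf.fderiv_right (m := 1) (by norm_num)).differentiable one_ne_zero
  change fderiv ℝ (fun q => fderiv ℝ f q w') p w = _
  rw [fderiv_clm_apply (hdf p) (differentiableAt_const w')]
  simp

lemma pd2_comm (hf : ContDiff ℝ 2 f) (w w' : ℝ × ℝ) : pd2 w (pd2 w' f) = pd2 w' (pd2 w f) := by
  ext p
  rw [pd2_pd2 hf, pd2_pd2 hf]
  exact hf.contDiffAt.isSymmSndFDerivAt (by simp [minSmoothness_of_isRCLikeNormedField]) w w'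

end Pd2

noncomputable def linearizedOperator (u v : ℝ × ℝ → ℝ) (p : ℝ × ℝ) : ℝ :=
  dy (dy v) p - ((dy u p + 2 * p.1) * dx (dx v) p + dx (dx u) p * dy v p
    + (p.2 - dx u p) * dx (dy v) p - (dx (dy u) p + 1) * dx v p)

section Linearization

variable {u f g : ℝ × ℝ → ℝ}

lemma dx_dy_dy_of_eq (hu : ContDiff ℝ 3 u)
    (heq : ∀ p : ℝ × ℝ, dy (dy u) p = (dy u p + 2 * p.1) * dx (dx u) p
        + (p.2 - dx u p) * dx (dy u) p - dx u p) (p : ℝ × ℝ) :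
    dx (dy (dy u)) p = dx (dx u) p + (dy u p + 2 * p.1) * dx (dx (dx u)) p
        + (p.2 - dx u p) * dx (dx (dy u)) p := by
  have hu2 : ContDiff ℝ 2 u := hu.of_le (by norm_num)
  have hux : Differentiable ℝ (dx u) := differentiable_pd2 hu2 _
  have huy : Differentiable ℝ (dy u) := differentiable_pd2 hu2 _
  have huxx : Differentiable ℝ (dx (dx u)) := differentiable_pd2 (contDiff_pd2 hu (by norm_num) _) _
  have huxy : Differentiable ℝ (dx (dy u)) := differentiable_pd2 (contDiff_pd2 hu (by norm_num) _) _
  rw [funext heq]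
  simp only [dx, dy] at hux huy huxx huxy ⊢
  simp (disch := fun_prop) only [pd2_sub, pd2_add, pd2_mul, pd2_const, pd2_fst, pd2_snd,
    Pi.zero_apply]
  ring

lemma linearizedOperator_linear_comb (hf : ContDiff ℝ 2 f) (hg : ContDiff ℝ 2 g) (a b : ℝ)
    (p : ℝ × ℝ) :
    linearizedOperator u (fun q => a * f q + b * g q) p
      = a * linearizedOperator u f p + b * linearizedOperator u g p := by
  have hf1 := hf.differentiable two_ne_zero
  have hg1 := hg.differentiable two_ne_zero
  simp only [linearizedOperator, dx, dy, pd2_linear_comb _ _ _ hf1 hg1,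
    pd2_linear_comb _ _ _ (differentiable_pd2 hf _) (differentiable_pd2 hg _)]
  ring

lemma linearizedOperator_snd (p : ℝ × ℝ) :
    linearizedOperator u Prod.snd p = -dx (dx u) p := by
  simp [linearizedOperator, dx, dy, pd2_snd, pd2_const]

lemma linearizedOperator_dx (hu : ContDiff ℝ 3 u)
    (heq : ∀ p : ℝ × ℝ, dy (dy u) p = (dy u p + 2 * p.1) * dx (dx u) p
        + (p.2 - dx u p) * dx (dy u) p - dx u p) (p : ℝ × ℝ) :
    linearizedOperator u (dx u) p = 2 * dx (dx u) p := by
  have hyx : dy (dx u) = dx (dy u) := pd2_comm (hu.of_le (by norm_num)) _ _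
  have hyyx : dy (dx (dy u)) = dx (dy (dy u)) := pd2_comm (contDiff_pd2 hu (by norm_num) _) _ _
  rw [linearizedOperator, hyx, hyyx, dx_dy_dy_of_eq hu heq]
  ring

end Linearization

theorem gamma_m2_is_symmetry (u : ℝ × ℝ → ℝ) (hu : ContDiff ℝ 3 u)
    (heq : ∀ p : ℝ × ℝ,
      dy (dy u) p = (dy u p + 2 * p.1) * dx (dx u) p
        + (p.2 - dx u p) * dx (dy u) p - dx u p) :
    ∀ p : ℝ × ℝ,
      (fun v : ℝ × ℝ → ℝ =>
        dy (dy v) p = (dy u p + 2 * p.1) * dx (dx v) p + dx (dx u) p * dy v p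
          + (p.2 - dx u p) * dx (dy v) p - (dx (dy u) p + 1) * dx v p)
      (fun q => -q.2 - (1 / 2) * dx u q) := by
  intro p
  have hv : (fun q : ℝ × ℝ => -q.2 - (1 / 2) * dx u q)
      = fun q => (-1) * Prod.snd q + (-1 / 2) * dx u q := by
    funext q; ring
  have hux : ContDiff ℝ 2 (dx u) := contDiff_pd2 hu (by norm_num) _
  have hL : linearizedOperator u (fun q => -q.2 - (1 / 2) * dx u q) p = 0 := by
    rw [hv, linearizedOperator_linear_comb contDiff_snd hux,
      linearizedOperator_snd, linearizedOperator_dx hu heq]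
    ring
  exact sub_eq_zero.mp hL
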